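/- Any binary linear code of length 2^m with the property that every nonzero codeword has Hamming weight 2^(m-1) or 2^m, and containing the all-ones vector, has dimension at most m+1; if the dimension equals m+1, the code is equivalent (up to coordinate permutation) to RM(1,m). -/

import Mathlib

/-- Sign character on `ZMod 2`, valued in `ℤ`. -/
def sgn2 (u : ZMod 2) : ℤ := if u = 0 then 1 else -1

lemma sgn2_add : ∀ (u v : ZMod 2), sgn2 (u + v) = sgn2 u * sgn2 v := by decide

lemma sgn2_eq : ∀ (u : ZMod 2), sgn2 u = 1 - 2 * (if u ≠ 0 then 1 else 0) := by decide

lemma zmod2_eq_one : ∀ {u : ZMod 2}, u ≠ 0 → u = 1 := by decide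

/-- Sign of a finite sum is the product of signs. -/
lemma sgn2_sum {ι : Type*} (s : Finset ι) (f : ι → ZMod 2) :
    sgn2 (∑ i ∈ s, f i) = ∏ i ∈ s, sgn2 (f i) := by
  classical
  induction s using Finset.induction with
  | empty => simp [sgn2]
  | @insert a s' hx ih => rw [Finset.sum_insert hx, Finset.prod_insert hx, sgn2_add, ih]

/-- Character-sum orthogonality over `(ZMod 2)^k`. -/
lemma sgn2_orth (k : ℕ) (w : Fin k → ZMod 2) :
    ∑ a : Fin k → ZMod 2, sgn2 (∑ i, a i * w i) = if w = 0 then 2 ^ k else 0 := by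
  classical
  by_cases hw : w = 0
  · subst hw
    simp [sgn2, Fintype.card_fun]
  · simp only [if_neg hw]
    obtain ⟨j, hj⟩ : ∃ j, w j ≠ 0 := by
      by_contra h
      push_neg at h
      exact hw (funext fun j => h j)
    have hj1 : w j = 1 := zmod2_eq_one hj
    refine Finset.sum_ninvolution (fun a => Function.update a j (a j + 1)) ?_ ?_ ?_ ?_
    · intro a
      have h1 : ∀ i ∈ Finset.univ.erase j,
          Function.update a j (a j + 1) i * w i = a i * w i := by
        intro i hi
        rw [Function.update_of_ne (Finset.mem_erase.mp hi).1]
      have e1 := Finset.add_sum_erase Finset.univ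
        (fun i => Function.update a j (a j + 1) i * w i) (Finset.mem_univ j)
      have e2 := Finset.add_sum_erase Finset.univ (fun i => a i * w i) (Finset.mem_univ j)
      have hupd : ∑ i, Function.update a j (a j + 1) i * w i = (∑ i, a i * w i) + 1 := by
        rw [← e1, ← e2, Finset.sum_congr rfl h1]
        rw [Function.update_self, hj1]
        ring
      rw [hupd, sgn2_add]
      have h2 : sgn2 1 = -1 := by decide
      rw [h2]; ring
    · intro a _ h
      have := congrFun h j
      simp at this
    · intro a; exact Finset.mem_univ _
    · intro a
      ext i
      by_cases hij : i = j
      · subst hij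
        simp only [Function.update_self]
        have : (1 : ZMod 2) + 1 = 0 := by decide
        rw [add_assoc, this, add_zero]
      · simp [Function.update_of_ne hij]

lemma sgn2_count {m : ℕ} (c : (Fin m → ZMod 2) → ZMod 2) :
    ∑ x, sgn2 (c x) = 2 ^ m
      - 2 * ((((Finset.univ : Finset (Fin m → ZMod 2)).filter (fun x => c x ≠ 0)).card : ℤ)) := by
  classical
  have h : ∀ u : ZMod 2, sgn2 u = 1 - 2 * (if u ≠ 0 then 1 else 0) := by decide
  calc ∑ x, sgn2 (c x) = ∑ x : Fin m → ZMod 2, (1 - 2 * (if c x ≠ 0 then (1:ℤ) else 0)) := by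
        exact Finset.sum_congr rfl fun x _ => h (c x)
    _ = (Fintype.card (Fin m → ZMod 2) : ℤ) - 2 * ∑ x : Fin m → ZMod 2, (if c x ≠ 0 then (1:ℤ) else 0) := by
        rw [Finset.sum_sub_distrib, ← Finset.mul_sum]
        simp [Finset.card_univ]
    _ = _ := by
        rw [← Finset.sum_filter, Finset.sum_const]
        simp [Fintype.card_fun]


lemma fiber_count {m k : ℕ} (φ : (Fin m → ZMod 2) → (Fin k → ZMod 2))
    (astar : Fin k → ZMod 2) (hne : astar ≠ 0)
    (hS : ∀ a : Fin k → ZMod 2,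
      ∑ x, sgn2 (∑ i, a i * φ x i) = if a = 0 then 2 ^ m else if a = astar then -(2 ^ m) else 0)
    (y : Fin k → ZMod 2) :
    (2 ^ k : ℤ) * ((Finset.univ.filter (fun x => φ x = y)).card : ℤ)
      = 2 ^ m - sgn2 (∑ i, astar i * y i) * 2 ^ m := by
  classical
  have haddzero : ∀ u v : ZMod 2, u + v = 0 ↔ u = v := by decide
  have lhs_eq : ∑ x, (if φ x = y then (2 ^ k : ℤ) else 0)
      = (2 ^ k : ℤ) * ((Finset.univ.filter (fun x => φ x = y)).card : ℤ) := by
    rw [← Finset.sum_filter, Finset.sum_const]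
    rw [nsmul_eq_mul, mul_comm]
  have swap : ∑ x, (if φ x = y then (2 ^ k : ℤ) else 0)
      = ∑ a : Fin k → ZMod 2, sgn2 (∑ i, a i * y i) * (∑ x, sgn2 (∑ i, a i * φ x i)) := by
    calc ∑ x, (if φ x = y then (2 ^ k : ℤ) else 0)
        = ∑ x, ∑ a : Fin k → ZMod 2, sgn2 (∑ i, a i * (φ x i + y i)) := by
          refine Finset.sum_congr rfl fun x _ => ?_
          rw [sgn2_orth k (fun i => φ x i + y i)]
          congr 1
          simp only [eq_iff_iff]
          constructor
          · intro hz
            funext i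
            show φ x i + y i = 0
            exact (haddzero _ _).mpr (congrFun hz i)
          · intro hz
            funext i
            have h2 : φ x i + y i = 0 := congrFun hz i
            exact (haddzero _ _).mp h2
      _ = ∑ a : Fin k → ZMod 2, ∑ x, sgn2 (∑ i, a i * (φ x i + y i)) := Finset.sum_comm
      _ = ∑ a : Fin k → ZMod 2, ∑ x, sgn2 (∑ i, a i * φ x i) * sgn2 (∑ i, a i * y i) := by
          refine Finset.sum_congr rfl fun a _ => Finset.sum_congr rfl fun x _ => ?_
          have : ∑ i, a i * (φ x i + y i) = (∑ i, a i * φ x i) + ∑ i, a i * y i := by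
            rw [← Finset.sum_add_distrib]
            exact Finset.sum_congr rfl fun i _ => mul_add _ _ _
          rw [this, sgn2_add]
      _ = ∑ a : Fin k → ZMod 2, sgn2 (∑ i, a i * y i) * (∑ x, sgn2 (∑ i, a i * φ x i)) := by
          refine Finset.sum_congr rfl fun a _ => ?_
          rw [Finset.mul_sum]
          exact Finset.sum_congr rfl fun x _ => mul_comm _ _
  rw [← lhs_eq, swap]
  have hzero_ne : (0 : Fin k → ZMod 2) ≠ astar := fun h => hne h.symm
  have hsub : ∑ a : Fin k → ZMod 2, sgn2 (∑ i, a i * y i) * (∑ x, sgn2 (∑ i, a i * φ x i))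
      = ∑ a ∈ ({0, astar} : Finset (Fin k → ZMod 2)),
          sgn2 (∑ i, a i * y i) * (∑ x, sgn2 (∑ i, a i * φ x i)) := by
    symm
    refine Finset.sum_subset (Finset.subset_univ _) ?_
    intro a _ ha
    simp only [Finset.mem_insert, Finset.mem_singleton, not_or] at ha
    rw [hS a, if_neg ha.1, if_neg ha.2, mul_zero]
  rw [hsub, Finset.sum_pair hzero_ne]
  have h0 : (∑ i, (0 : Fin k → ZMod 2) i * y i) = 0 := by simp
  rw [hS 0, hS astar, if_pos rfl, if_neg hne, if_pos rfl, h0]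
  have : sgn2 0 = 1 := by decide
  rw [this]
  ring


/-- The first-order Reed–Muller code `RM(1, m)`: the span of the constant-one
function together with the coordinate functions on `F₂^m`. -/
def ReedMullerOne (m : ℕ) : Submodule (ZMod 2) ((Fin m → ZMod 2) → ZMod 2) :=
  Submodule.span (ZMod 2)
    ({fun _ => 1} ∪ Set.range (fun i : Fin m => fun x => x i))

/-- Hamming weight of a codeword of length `2^m`, indexed by the points of `F₂^m`. -/
def hammingWt {m : ℕ} (c : (Fin m → ZMod 2) → ZMod 2) : ℕ :=
  ((Finset.univ : Finset (Fin m → ZMod 2)).filter (fun x => c x ≠ 0)).card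

theorem stmt_12 (m : ℕ) (C : Submodule (ZMod 2) ((Fin m → ZMod 2) → ZMod 2))
    (hw : ∀ c ∈ C, c ≠ 0 → hammingWt c = 2 ^ (m - 1) ∨ hammingWt c = 2 ^ m)
    (hone : (fun _ => (1 : ZMod 2)) ∈ C) :
    Module.finrank (ZMod 2) C ≤ m + 1 ∧
    (Module.finrank (ZMod 2) C = m + 1 →
      ∃ π : Equiv.Perm (Fin m → ZMod 2),
        ∀ f, f ∈ C ↔ (f ∘ π) ∈ ReedMullerOne m) := by
  classical
  have hcard : Fintype.card (Fin m → ZMod 2) = 2 ^ m := by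
    simp [Fintype.card_fun]
  have honefun_ne : (fun _ => (1 : ZMod 2)) ≠ (0 : (Fin m → ZMod 2) → ZMod 2) := by
    intro h
    have := congrFun h (fun _ => 0)
    exact one_ne_zero this
  set k := Module.finrank (ZMod 2) C with hkdef
  let b : Module.Basis (Fin k) (ZMod 2) C := Module.finBasis (ZMod 2) C
  set φ : (Fin m → ZMod 2) → (Fin k → ZMod 2) :=
    fun x i => (b i : (Fin m → ZMod 2) → ZMod 2) x with hφdef
  set fa : (Fin k → ZMod 2) → ((Fin m → ZMod 2) → ZMod 2) :=
    fun a => ((∑ i, a i • b i : C) : (Fin m → ZMod 2) → ZMod 2) with hfadef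
  have hfa_mem : ∀ a, fa a ∈ C := fun a => (∑ i, a i • b i : C).2
  have hfa_apply : ∀ a x, fa a x = ∑ i, a i * φ x i := by
    intro a x
    simp only [hfadef]
    rw [AddSubmonoidClass.coe_finset_sum]
    rw [Finset.sum_apply]
    rfl
  have hfa_inj : Function.Injective fa := by
    intro a a' h
    have h2 : (∑ i, a i • b i : C) = ∑ i, a' i • b i := Subtype.coe_injective h
    have h3 : (⇑(b.repr (∑ i, a i • b i)) : Fin k → ZMod 2)
        = ⇑(b.repr (∑ i, a' i • b i)) := by rw [h2]
    rwa [b.repr_sum_self, b.repr_sum_self] at h3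
  set astar : Fin k → ZMod 2 := fun i => b.repr ⟨fun _ => 1, hone⟩ i with hastardef
  have hfa_astar : fa astar = fun _ => 1 := by
    simp only [hfadef]
    have : (∑ i, astar i • b i : C) = ⟨fun _ => 1, hone⟩ := by
      rw [hastardef]
      exact b.sum_repr _
    rw [this]
  have hastar_ne : astar ≠ 0 := by
    intro h
    apply honefun_ne
    rw [← hfa_astar, h]
    simp only [hfadef]
    simp
  have hsum1 : ∀ x, ∑ i, astar i * φ x i = 1 := by
    intro x
    rw [← hfa_apply, hfa_astar]
  have hfa_zero : fa 0 = 0 := by simp only [hfadef]; simp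
  -- the character sums
  have hS : ∀ a : Fin k → ZMod 2,
      ∑ x, sgn2 (∑ i, a i * φ x i) = if a = 0 then (2:ℤ) ^ m else if a = astar then -(2 ^ m) else 0 := by
    intro a
    have hc : ∑ x, sgn2 (∑ i, a i * φ x i) = ∑ x, sgn2 (fa a x) := by
      refine Finset.sum_congr rfl fun x _ => ?_
      rw [hfa_apply]
    rw [hc, sgn2_count (fa a)]
    by_cases h0 : a = 0
    · subst h0
      rw [if_pos rfl]
      rw [hfa_zero]
      simp
    · rw [if_neg h0]
      by_cases hstar : a = astar
      · subst hstar
        rw [if_pos rfl, hfa_astar]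
        have : (Finset.univ.filter fun x : Fin m → ZMod 2 => (1 : ZMod 2) ≠ 0) = Finset.univ := by
          simp
        rw [this, Finset.card_univ, hcard]
        push_cast
        ring
      · rw [if_neg hstar]
        have hcne : fa a ≠ 0 := by
          intro h
          exact h0 (hfa_inj (h.trans hfa_zero.symm))
        have hwt := hw (fa a) (hfa_mem a) hcne
        have hfull : hammingWt (fa a) = 2 ^ m → False := by
          intro hfull
          have hset : (Finset.univ.filter fun x => fa a x ≠ 0) = Finset.univ := by
            apply Finset.eq_univ_of_card
            rw [← hcard] at hfull
            exact hfull
          have hallone : fa a = fun _ => 1 := by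
            funext x
            have hx : fa a x ≠ 0 := by
              have := Finset.mem_filter.mp (hset ▸ Finset.mem_univ x)
              exact this.2
            revert hx
            generalize fa a x = u
            revert u
            decide
          exact hstar (hfa_inj (hallone.trans hfa_astar.symm))
        rcases hwt with hwt | hwt
        · rcases Nat.eq_zero_or_pos m with hm | hm
          · exfalso
            apply hfull
            rw [hwt, hm]
          · have h2 : (2:ℤ) * (hammingWt (fa a) : ℤ) = 2 ^ m := by
              rw [hwt]
              push_cast
              rw [← pow_succ']
              congr 1
              omega
            rw [hammingWt] at h2
            rw [h2]
            ring
        · exact absurd hwt hfull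
  have hfib := fiber_count φ astar hastar_ne hS
  -- Part 1
  obtain ⟨j, hj⟩ : ∃ j, astar j ≠ 0 := by
    by_contra h
    push_neg at h
    exact hastar_ne (funext h)
  have hj1 : astar j = 1 := by revert hj; generalize astar j = u; revert u; decide
  have hip : ∀ y : Fin k → ZMod 2, (∀ i, i ≠ j → y i = 0) → y j = 1 →
      ∑ i, astar i * y i = 1 := by
    intro y hy hyj
    rw [Finset.sum_eq_single j]
    · rw [hyj, hj1, mul_one]
    · intro i _ hij
      rw [hy i hij, mul_zero]
    · intro h; exact absurd (Finset.mem_univ j) h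
  set y₀ : Fin k → ZMod 2 := fun i => if i = j then 1 else 0 with hy₀def
  have hy₀ : ∑ i, astar i * y₀ i = 1 := by
    apply hip
    · intro i hij
      rw [hy₀def]
      simp [hij]
    · rw [hy₀def]; simp
  have hfib0 := hfib y₀
  rw [hy₀] at hfib0
  have hsgn1 : sgn2 1 = -1 := by decide
  rw [hsgn1] at hfib0
  have hNpos : (1:ℤ) ≤ ((Finset.univ.filter (fun x => φ x = y₀)).card : ℤ) := by
    by_contra h
    push_neg at h
    have : ((Finset.univ.filter (fun x => φ x = y₀)).card : ℤ) = 0 := by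
      have := Int.natCast_nonneg (Finset.univ.filter (fun x => φ x = y₀)).card
      omega
    rw [this, mul_zero] at hfib0
    have h2 : (0:ℤ) < 2 ^ m := by positivity
    omega
  have hk_le : k ≤ m + 1 := by
    have h1 : (2:ℤ) ^ k ≤ 2 ^ k * ((Finset.univ.filter (fun x => φ x = y₀)).card : ℤ) := by
      nlinarith [pow_pos (by norm_num : (0:ℤ) < 2) k]
    rw [hfib0] at h1
    have h2 : (2:ℤ) ^ k ≤ 2 ^ (m+1) := by
      have : (2:ℤ)^m - -1 * 2^m = 2^(m+1) := by ring
      rw [this] at h1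
      exact h1
    have h3 : (2:ℕ) ^ k ≤ 2 ^ (m+1) := by exact_mod_cast h2
    exact (Nat.pow_le_pow_iff_right (by norm_num)).mp h3
  refine ⟨hk_le, ?_⟩
  intro hk
  -- fibers over the affine hyperplane have exactly one point
  have hsgn0 : sgn2 0 = 1 := by decide
  have hN1 : ∀ y : Fin k → ZMod 2, (∑ i, astar i * y i) = 1 →
      (Finset.univ.filter (fun x => φ x = y)).card = 1 := by
    intro y hy
    have hfy := hfib y
    rw [hy, hsgn1] at hfy
    have hpow : (2:ℤ) ^ k = 2 ^ (m+1) := by rw [hk]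
    rw [hpow] at hfy
    have h2 : (2:ℤ) ^ (m+1) * ((Finset.univ.filter (fun x => φ x = y)).card : ℤ)
        = 2 ^ (m+1) * 1 := by
      rw [hfy]; ring
    have hpos : (0:ℤ) < 2 ^ (m+1) := by positivity
    have h3 := mul_left_cancel₀ (ne_of_gt hpos) h2
    exact_mod_cast h3
  have hφinj : Function.Injective φ := by
    intro x x' hxy
    have h1 := hN1 (φ x) (hsum1 x)
    by_contra hne2
    have hsub : ({x, x'} : Finset (Fin m → ZMod 2)) ⊆
        Finset.univ.filter (fun z => φ z = φ x) := by
      intro t ht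
      simp only [Finset.mem_insert, Finset.mem_singleton] at ht
      rcases ht with rfl | rfl
      · simp
      · simp [← hxy]
    have hcard2 : ({x, x'} : Finset (Fin m → ZMod 2)).card = 2 := Finset.card_pair hne2
    have := Finset.card_le_card hsub
    omega
  -- reindexing
  have hcard_sub : Fintype.card {i : Fin k // i ≠ j} = m := by
    have h1 : Fintype.card {i : Fin k // i ≠ j}
        = Fintype.card (Fin k) - Fintype.card {i : Fin k // i = j} := by
      exact Fintype.card_subtype_compl _
    rw [Fintype.card_subtype_eq, Fintype.card_fin] at h1
    omega
  set ρ : {i : Fin k // i ≠ j} ≃ Fin m := Fintype.equivFinOfCardEq hcard_sub with hρdef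
  set ψ : (Fin m → ZMod 2) → (Fin m → ZMod 2) :=
    fun x r => φ x ((ρ.symm r) : Fin k) with hψdef
  have hcoord : ∀ (x : Fin m → ZMod 2) (i : Fin k) (hi : i ≠ j),
      ψ x (ρ ⟨i, hi⟩) = φ x i := by
    intro x i hi
    simp only [hψdef]
    rw [Equiv.symm_apply_apply]
  have hφrec : ∀ x x' : Fin m → ZMod 2,
      (∀ (i : Fin k), i ≠ j → φ x i = φ x' i) → φ x = φ x' := by
    intro x x' h
    funext i
    by_cases hij : i = j
    · subst hij
      have e1 : astar i * φ x i + ∑ i' ∈ Finset.univ.erase i, astar i' * φ x i' = 1 := by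
        have := Finset.add_sum_erase Finset.univ (fun i' => astar i' * φ x i')
          (Finset.mem_univ i)
        simpa using this.trans (hsum1 x)
      have e2 : astar i * φ x' i + ∑ i' ∈ Finset.univ.erase i, astar i' * φ x' i' = 1 := by
        have := Finset.add_sum_erase Finset.univ (fun i' => astar i' * φ x' i')
          (Finset.mem_univ i)
        simpa using this.trans (hsum1 x')
      have e3 : ∑ i' ∈ Finset.univ.erase i, astar i' * φ x i'
          = ∑ i' ∈ Finset.univ.erase i, astar i' * φ x' i' := by
        refine Finset.sum_congr rfl fun i' hi' => ?_
        rw [h i' (Finset.mem_erase.mp hi').1]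
      rw [e3] at e1
      have e4 := e1.trans e2.symm
      have e5 := add_right_cancel e4
      rwa [hj1, one_mul, one_mul] at e5
    · exact h i hij
  have hψinj : Function.Injective ψ := by
    intro x x' h
    apply hφinj
    apply hφrec
    intro i hi
    rw [← hcoord x i hi, ← hcoord x' i hi, h]
  have hψbij : Function.Bijective ψ := Finite.injective_iff_bijective.mp hψinj
  set e : Equiv.Perm (Fin m → ZMod 2) := Equiv.ofBijective ψ hψbij with hedef
  set π : Equiv.Perm (Fin m → ZMod 2) := e.symm with hπdef
  have hψπ : ∀ z, ψ (π z) = z := fun z => e.apply_symm_apply z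
  have hwcoord : ∀ (z : Fin m → ZMod 2) (i : Fin k) (hi : i ≠ j),
      φ (π z) i = z (ρ ⟨i, hi⟩) := by
    intro z i hi
    rw [← hcoord (π z) i hi, hψπ]
  set T : ((Fin m → ZMod 2) → ZMod 2) ≃ₗ[ZMod 2] ((Fin m → ZMod 2) → ZMod 2) :=
    LinearEquiv.funCongrLeft (ZMod 2) (ZMod 2) π with hTdef
  have hTf : ∀ f : (Fin m → ZMod 2) → ZMod 2, T f = f ∘ ⇑π := fun f => rfl
  have him : ∀ u v : ZMod 2, u + v = 1 → u = 1 + v := by decide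
  have hmaple : Submodule.map (T : ((Fin m → ZMod 2) → ZMod 2) →ₗ[ZMod 2] _) C
      ≤ ReedMullerOne m := by
    rintro g hg
    rw [Submodule.mem_map] at hg
    obtain ⟨f, hf, rfl⟩ := hg
    set a : Fin k → ZMod 2 := fun i => b.repr ⟨f, hf⟩ i with hadef
    have hfa_f : fa a = f := by
      simp only [hfadef]
      have : (∑ i, a i • b i : C) = ⟨f, hf⟩ := by
        simp only [hadef]
        exact b.sum_repr _
      rw [this]
    have key : (T : ((Fin m → ZMod 2) → ZMod 2) →ₗ[ZMod 2] _) f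
        = (a j) • (fun _ => (1 : ZMod 2))
          + ∑ r : Fin m, (a ((ρ.symm r) : Fin k) + a j * astar ((ρ.symm r) : Fin k))
              • (fun z : Fin m → ZMod 2 => z r) := by
      funext z
      show f (π z) = _
      rw [← hfa_f, hfa_apply]
      have hwj : φ (π z) j = 1 + ∑ i ∈ Finset.univ.erase j, astar i * φ (π z) i := by
        have e2 : astar j * φ (π z) j + ∑ i ∈ Finset.univ.erase j, astar i * φ (π z) i = 1 := by
          have := Finset.add_sum_erase Finset.univ (fun i => astar i * φ (π z) i)
            (Finset.mem_univ j)
          simpa using this.trans (hsum1 (π z))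
        rw [hj1, one_mul] at e2
        exact him _ _ e2
      have step1 : ∑ i, a i * φ (π z) i
          = a j * φ (π z) j + ∑ i ∈ Finset.univ.erase j, a i * φ (π z) i := by
        exact (Finset.add_sum_erase Finset.univ (fun i => a i * φ (π z) i)
          (Finset.mem_univ j)).symm
      have step2 : a j * φ (π z) j
          = a j + ∑ i ∈ Finset.univ.erase j, a j * (astar i * φ (π z) i) := by
        rw [hwj, mul_add, mul_one, Finset.mul_sum]
      have step3 : ∑ i, a i * φ (π z) i
          = a j + ∑ i ∈ Finset.univ.erase j, (a i + a j * astar i) * φ (π z) i := by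
        rw [step1, step2, add_assoc, ← Finset.sum_add_distrib]
        congr 1
        refine Finset.sum_congr rfl fun i _ => ?_
        ring
      rw [step3]
      have hmem_iff : ∀ i : Fin k, i ∈ Finset.univ.erase j ↔ i ≠ j := by
        intro i
        simp [Finset.mem_erase]
      have step4 : ∑ i ∈ Finset.univ.erase j, (a i + a j * astar i) * φ (π z) i
          = ∑ s : {i : Fin k // i ≠ j}, (a ↑s + a j * astar ↑s) * φ (π z) ↑s := by
        exact Finset.sum_subtype _ hmem_iff _
      have step5 : ∑ s : {i : Fin k // i ≠ j}, (a ↑s + a j * astar ↑s) * φ (π z) ↑s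
          = ∑ r : Fin m, (a ↑(ρ.symm r) + a j * astar ↑(ρ.symm r)) * φ (π z) ↑(ρ.symm r) := by
        exact (Equiv.sum_comp ρ.symm (fun s => (a ↑s + a j * astar ↑s) * φ (π z) ↑s)).symm
      have step6 : ∀ r : Fin m, φ (π z) ↑(ρ.symm r) = z r := by
        intro r
        rw [hwcoord z ↑(ρ.symm r) (ρ.symm r).2]
        congr 1
        rw [Subtype.coe_eta, Equiv.apply_symm_apply]
      rw [step4, step5]
      have step7 : ∑ r : Fin m, (a ↑(ρ.symm r) + a j * astar ↑(ρ.symm r)) * φ (π z) ↑(ρ.symm r)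
          = ∑ r : Fin m, (a ↑(ρ.symm r) + a j * astar ↑(ρ.symm r)) * z r := by
        refine Finset.sum_congr rfl fun r _ => ?_
        rw [step6]
      rw [step7]
      simp only [Pi.add_apply, Pi.smul_apply, Finset.sum_apply, smul_eq_mul]
      ring
    rw [key]
    apply Submodule.add_mem
    · exact Submodule.smul_mem _ _ (Submodule.subset_span (Or.inl rfl))
    · exact Submodule.sum_mem _ fun r _ =>
        Submodule.smul_mem _ _ (Submodule.subset_span (Or.inr ⟨r, rfl⟩))
  -- rank of RM(1,m)
  have hRMle : Module.finrank (ZMod 2) (ReedMullerOne m) ≤ m + 1 := by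
    set u : Fin (m + 1) → ((Fin m → ZMod 2) → ZMod 2) :=
      Fin.cons (fun _ => 1) (fun i => fun x => x i) with hudef
    have hurange : Set.range u
        = {fun _ => 1} ∪ Set.range (fun i : Fin m => fun x => x i) := by
      rw [hudef, Fin.range_cons, Set.insert_eq]
    have h1 := finrank_range_le_card (R := ZMod 2) u
    rw [ReedMullerOne, ← hurange]
    simpa [Set.finrank] using h1
  have heq : Submodule.map (T : ((Fin m → ZMod 2) → ZMod 2) →ₗ[ZMod 2] _) C
      = ReedMullerOne m := by
    apply Submodule.eq_of_le_of_finrank_le hmaple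
    rw [LinearEquiv.finrank_map_eq, ← hkdef, hk]
    exact hRMle
  refine ⟨π, fun f => ?_⟩
  constructor
  · intro hf
    have h1 := Submodule.mem_map_of_mem
      (f := (T : ((Fin m → ZMod 2) → ZMod 2) →ₗ[ZMod 2] ((Fin m → ZMod 2) → ZMod 2))) hf
    rw [heq] at h1
    exact h1
  · intro hf
    rw [← hTf f, ← heq] at hf
    obtain ⟨g, hg, hTg⟩ := Submodule.mem_map.mp hf
    have : g = f := T.injective hTg
    exact this ▸ hg
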